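/- arXiv:2506.08373 — 3 statements merged into one kernel-verified Lean document; each statement's English description precedes it below -/
import Mathlib

section
/- Let p ∈ ℝⁿ be a probability vector, i.e., p_i ≥ 0 for all i and Σ_{i=1}^n p_i = 1. Then for every z ∈ ℝⁿ, ‖(diag(p) − p pᵀ) z‖₂ ≤ ‖z‖_∞, where diag(p) is the diagonal matrix with entries p, ‖·‖₂ is the Euclidean norm, and ‖·‖_∞ is the supremum norm. (The matrix diag(p) − p pᵀ is the Jacobian of the softmax map at any point whose softmax equals p.) -/
open scoped BigOperators ENNReal

/-- Softmax map on `ℝⁿ`. -/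
noncomputable def softmax {n : ℕ} (x : Fin n → ℝ) : Fin n → ℝ :=
  fun i => Real.exp (x i) / ∑ j, Real.exp (x j)

/-- Euclidean norm on `ℝⁿ`. -/
noncomputable def l2norm {n : ℕ} (x : Fin n → ℝ) : ℝ :=
  Real.sqrt (∑ i, x i ^ 2)

/-- Supremum norm on `ℝⁿ`. -/
noncomputable def linftyNorm {n : ℕ} (x : Fin n → ℝ) : ℝ :=
  ⨆ i, |x i|

/-- Spectral norm (operator norm w.r.t. Euclidean norms) of a real matrix. -/
noncomputable def matSpectralNorm {m n : ℕ} (A : Matrix (Fin m) (Fin n) ℝ) : ℝ :=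
  sSup { r | ∃ x : Fin n → ℝ, l2norm x ≤ 1 ∧ r = l2norm (A.mulVec x) }

/-- Smallest singular value of a square real matrix. -/
noncomputable def sigmaMin {d : ℕ} (W : Matrix (Fin d) (Fin d) ℝ) : ℝ :=
  sInf { r | ∃ x : Fin d → ℝ, l2norm x = 1 ∧ r = l2norm (W.mulVec x) }

/-- `‖X‖_{∞,2}`: the maximum Euclidean norm of a row of `X`. -/
noncomputable def maxRowNorm {n d : ℕ} (X : Matrix (Fin n) (Fin d) ℝ) : ℝ :=
  ⨆ i, l2norm (X i)

/-!
Write `s = ∑ j, p j * z j` for the `p`-mean of `z`. The `i`-th entry of `(diag(p) − p pᵀ) z` is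
`p i * (z i - s)`, and since `0 ≤ p i ≤ 1` its square is at most `p i * (z i - s) ^ 2`. Summing,
the squared Euclidean norm is at most the `p`-variance of `z`, which is at most the second moment
`∑ i, p i * z i ^ 2 ≤ ‖z‖_∞ ^ 2`.
-/

open Finset Matrix

section WeightedSums

variable {ι : Type*} [Fintype ι]

theorem diagonal_sub_outer_mulVec {R : Type*} [CommRing R] [DecidableEq ι] (p z : ι → R) :
    (diagonal p - of fun i j => p i * p j) *ᵥ z = fun i => p i * (z i - p ⬝ᵥ z) := by
  ext i
  simp only [sub_mulVec, mulVec_diagonal, Pi.sub_apply, mul_sub]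
  simp only [mulVec, dotProduct, of_apply, mul_sum, mul_assoc]

theorem sum_mul_sub_dotProduct_sq {R : Type*} [CommRing R] {p : ι → R} (hsum : ∑ i, p i = 1)
    (z : ι → R) :
    ∑ i, p i * (z i - p ⬝ᵥ z) ^ 2 = ∑ i, p i * z i ^ 2 - (p ⬝ᵥ z) ^ 2 := by
  have hmean : ∑ i, p i * z i = p ⬝ᵥ z := rfl
  have expand : ∀ i, p i * (z i - p ⬝ᵥ z) ^ 2
      = p i * z i ^ 2 - 2 * (p ⬝ᵥ z) * (p i * z i) + (p ⬝ᵥ z) ^ 2 * p i := fun i => by ring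
  simp only [expand, sum_add_distrib, sum_sub_distrib, ← mul_sum, hmean, hsum]
  ring

theorem sum_mul_sq_le_sum_mul_sq {p : ι → ℝ} (hp : ∀ i, 0 ≤ p i) (hp1 : ∀ i, p i ≤ 1)
    (w : ι → ℝ) : ∑ i, (p i * w i) ^ 2 ≤ ∑ i, p i * w i ^ 2 :=
  sum_le_sum fun i _ => by
    rw [mul_pow, sq (p i)]
    exact mul_le_mul_of_nonneg_right (mul_le_of_le_one_left (hp i) (hp1 i)) (sq_nonneg _)

end WeightedSums

theorem abs_le_linftyNorm {n : ℕ} (z : Fin n → ℝ) (i : Fin n) : |z i| ≤ linftyNorm z :=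
  le_ciSup (f := fun i => |z i|) (Set.finite_range _).bddAbove i

theorem linftyNorm_nonneg {n : ℕ} (z : Fin n → ℝ) : 0 ≤ linftyNorm z :=
  Real.iSup_nonneg fun i => abs_nonneg (z i)

theorem sum_mul_sq_le_linftyNorm_sq {n : ℕ} {p : Fin n → ℝ} (hp : ∀ i, 0 ≤ p i)
    (hsum : ∑ i, p i = 1) (z : Fin n → ℝ) : ∑ i, p i * z i ^ 2 ≤ linftyNorm z ^ 2 :=
  calc ∑ i, p i * z i ^ 2 ≤ ∑ i, p i * linftyNorm z ^ 2 :=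
        sum_le_sum fun i _ => mul_le_mul_of_nonneg_left
          (sq_le_sq.mpr ((abs_le_linftyNorm z i).trans (le_abs_self _))) (hp i)
    _ = linftyNorm z ^ 2 := by rw [← sum_mul, hsum, one_mul]

theorem l2norm_le_of_sum_sq_le {n : ℕ} {x : Fin n → ℝ} {c : ℝ} (hc : 0 ≤ c)
    (h : ∑ i, x i ^ 2 ≤ c ^ 2) : l2norm x ≤ c :=
  Real.sqrt_le_iff.mpr ⟨hc, h⟩

/-- the softmax Jacobian `diag(p) − p pᵀ` at a probability vector `p`
satisfies `‖(diag(p) − p pᵀ) z‖₂ ≤ ‖z‖_∞`. -/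
theorem softmax_jacobian_bound {n : ℕ} (p z : Fin n → ℝ)
    (hp : ∀ i, 0 ≤ p i) (hsum : ∑ i, p i = 1) :
    l2norm ((Matrix.diagonal p - Matrix.of fun i j => p i * p j).mulVec z)
      ≤ linftyNorm z := by
  have hp1 : ∀ i, p i ≤ 1 := fun i =>
    hsum ▸ single_le_sum (fun j _ => hp j) (mem_univ i)
  rw [diagonal_sub_outer_mulVec]
  refine l2norm_le_of_sum_sq_le (linftyNorm_nonneg z) ?_
  calc ∑ i, (p i * (z i - p ⬝ᵥ z)) ^ 2
      ≤ ∑ i, p i * (z i - p ⬝ᵥ z) ^ 2 := sum_mul_sq_le_sum_mul_sq hp hp1 _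
    _ = ∑ i, p i * z i ^ 2 - (p ⬝ᵥ z) ^ 2 := sum_mul_sub_dotProduct_sq hsum z
    _ ≤ ∑ i, p i * z i ^ 2 := sub_le_self _ (sq_nonneg _)
    _ ≤ linftyNorm z ^ 2 := sum_mul_sq_le_linftyNorm_sq hp hsum z
end

section
/- Let M, M̂ ∈ ℝ^{n×n} and let A, Â ∈ ℝ^{n×n} be obtained by applying the softmax map to each row of M and M̂ respectively. Suppose every entry of A and of Â is at least m > 0. Then there exists a vector c ∈ ℝⁿ such that ‖M − M̂ − c𝟏ᵀ‖₂ ≤ (√n / m) ‖A − Â‖₂, where c𝟏ᵀ is the rank-one matrix whose (i,j) entry is c_i, 𝟏 ∈ ℝⁿ is the all-ones vector, and ‖·‖₂ denotes the spectral norm (the operator norm induced by the Euclidean norm). -/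
open scoped BigOperators ENNReal

/-!
With `c i = log (∑ⱼ exp (M i j)) - log (∑ⱼ exp (M̂ i j))`, the `(i, j)` entry of `M - M̂ - c𝟏ᵀ` is
`log A i j - log Â i j`. Since `log` is `1/m`-Lipschitz on `[m, ∞)`, this matrix is entrywise
bounded by `|A - Â| / m`, so its Frobenius norm is at most `‖A - Â‖_F / m`. The spectral norm is
bounded by the Frobenius norm, and the Frobenius norm of an `n`-column matrix by `√n` times the
spectral norm, since each column is the image of a unit vector.
-/

noncomputable def frobNorm {a b : ℕ} (B : Matrix (Fin a) (Fin b) ℝ) : ℝ :=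
  Real.sqrt (∑ i, ∑ j, B i j ^ 2)

section Norms

variable {a b : ℕ}

lemma frobNorm_nonneg (B : Matrix (Fin a) (Fin b) ℝ) : 0 ≤ frobNorm B :=
  Real.sqrt_nonneg _

lemma l2norm_single (j : Fin b) : l2norm (Pi.single j (1 : ℝ)) = 1 := by
  unfold l2norm
  rw [Finset.sum_eq_single j (fun k _ hk => by simp [hk]) (by simp)]
  simp

lemma l2norm_mulVec_le_frobNorm_mul (B : Matrix (Fin a) (Fin b) ℝ) (x : Fin b → ℝ) :
    l2norm (B.mulVec x) ≤ frobNorm B * l2norm x := by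
  unfold l2norm frobNorm
  rw [← Real.sqrt_mul (by positivity), Finset.sum_mul]
  refine Real.sqrt_le_sqrt (Finset.sum_le_sum fun i _ => ?_)
  simpa [Matrix.mulVec, dotProduct] using
    Finset.sum_mul_sq_le_sq_mul_sq Finset.univ (fun j => B i j) x

lemma l2norm_mulVec_le_frobNorm (B : Matrix (Fin a) (Fin b) ℝ) {x : Fin b → ℝ}
    (hx : l2norm x ≤ 1) : l2norm (B.mulVec x) ≤ frobNorm B :=
  (l2norm_mulVec_le_frobNorm_mul B x).trans
    (mul_le_of_le_one_right (frobNorm_nonneg B) hx)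

lemma bddAbove_matSpectralNorm_set (B : Matrix (Fin a) (Fin b) ℝ) :
    BddAbove { r | ∃ x : Fin b → ℝ, l2norm x ≤ 1 ∧ r = l2norm (B.mulVec x) } := by
  refine ⟨frobNorm B, ?_⟩
  rintro - ⟨x, hx, rfl⟩
  exact l2norm_mulVec_le_frobNorm B hx

lemma l2norm_mulVec_le_matSpectralNorm (B : Matrix (Fin a) (Fin b) ℝ) {x : Fin b → ℝ}
    (hx : l2norm x ≤ 1) : l2norm (B.mulVec x) ≤ matSpectralNorm B :=
  le_csSup (bddAbove_matSpectralNorm_set B) ⟨x, hx, rfl⟩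

lemma matSpectralNorm_nonneg (B : Matrix (Fin a) (Fin b) ℝ) : 0 ≤ matSpectralNorm B :=
  (Real.sqrt_nonneg _).trans (l2norm_mulVec_le_matSpectralNorm B (x := 0) (by simp [l2norm]))

lemma matSpectralNorm_le_frobNorm (B : Matrix (Fin a) (Fin b) ℝ) :
    matSpectralNorm B ≤ frobNorm B := by
  refine csSup_le ⟨_, 0, by simp [l2norm], rfl⟩ ?_
  rintro - ⟨x, hx, rfl⟩
  exact l2norm_mulVec_le_frobNorm B hx

lemma sum_sq_col_le_matSpectralNorm_sq (B : Matrix (Fin a) (Fin b) ℝ) (j : Fin b) :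
    ∑ i, B i j ^ 2 ≤ matSpectralNorm B ^ 2 := by
  have hcol : B.mulVec (Pi.single j 1) = fun i => B i j := by
    funext i
    simp [Matrix.mulVec, dotProduct, Pi.single_apply]
  have h := l2norm_mulVec_le_matSpectralNorm B (l2norm_single j).le
  rw [hcol, l2norm, Real.sqrt_le_left (matSpectralNorm_nonneg B)] at h
  exact h

lemma frobNorm_le_sqrt_mul_matSpectralNorm (B : Matrix (Fin a) (Fin b) ℝ) :
    frobNorm B ≤ Real.sqrt b * matSpectralNorm B := by
  calc frobNorm B = Real.sqrt (∑ j, ∑ i, B i j ^ 2) := by rw [frobNorm, Finset.sum_comm]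
    _ ≤ Real.sqrt (∑ _j : Fin b, matSpectralNorm B ^ 2) :=
      Real.sqrt_le_sqrt (Finset.sum_le_sum fun j _ => sum_sq_col_le_matSpectralNorm_sq B j)
    _ = Real.sqrt b * matSpectralNorm B := by
      rw [Finset.sum_const, Finset.card_univ, Fintype.card_fin, nsmul_eq_mul,
        Real.sqrt_mul (Nat.cast_nonneg b), Real.sqrt_sq (matSpectralNorm_nonneg B)]

lemma frobNorm_le_of_abs_le_mul {B C : Matrix (Fin a) (Fin b) ℝ} {K : ℝ} (hK : 0 ≤ K)
    (h : ∀ i j, |B i j| ≤ K * |C i j|) : frobNorm B ≤ K * frobNorm C := by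
  have hsq : ∀ i j, B i j ^ 2 ≤ K ^ 2 * C i j ^ 2 := fun i j => by
    simpa only [mul_pow, sq_abs] using pow_le_pow_left₀ (abs_nonneg _) (h i j) 2
  calc frobNorm B ≤ Real.sqrt (K ^ 2 * ∑ i, ∑ j, C i j ^ 2) := by
        simp only [frobNorm, Finset.mul_sum]
        exact Real.sqrt_le_sqrt (Finset.sum_le_sum fun i _ => Finset.sum_le_sum fun j _ => hsq i j)
    _ = K * frobNorm C := by rw [Real.sqrt_mul (sq_nonneg K), Real.sqrt_sq hK, frobNorm]

end Norms

lemma Real.log_sub_log_le_abs_sub_div {m a b : ℝ} (hm : 0 < m) (ha : 0 < a) (hb : m ≤ b) :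
    Real.log a - Real.log b ≤ |a - b| / m := by
  have hb0 : 0 < b := hm.trans_le hb
  calc Real.log a - Real.log b = Real.log (a / b) := (Real.log_div ha.ne' hb0.ne').symm
    _ ≤ a / b - 1 := Real.log_le_sub_one_of_pos (div_pos ha hb0)
    _ = (a - b) / b := by field_simp
    _ ≤ |a - b| / b := by gcongr; exact le_abs_self _
    _ ≤ |a - b| / m := by gcongr

lemma Real.abs_log_sub_log_le_abs_sub_div {m a b : ℝ} (hm : 0 < m) (ha : m ≤ a) (hb : m ≤ b) :
    |Real.log a - Real.log b| ≤ |a - b| / m := by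
  rw [abs_sub_le_iff]
  constructor
  · exact Real.log_sub_log_le_abs_sub_div hm (hm.trans_le ha) hb
  · rw [abs_sub_comm]
    exact Real.log_sub_log_le_abs_sub_div hm (hm.trans_le hb) ha

lemma log_softmax {n : ℕ} (x : Fin n → ℝ) (j : Fin n) :
    Real.log (softmax x j) = x j - Real.log (∑ k, Real.exp (x k)) := by
  have hZ : 0 < ∑ k, Real.exp (x k) :=
    Finset.sum_pos (fun k _ => Real.exp_pos _) ⟨j, Finset.mem_univ j⟩
  rw [softmax, Real.log_div (Real.exp_ne_zero _) hZ.ne', Real.log_exp]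

/-- if the row-wise softmaxes `A, Â` of `M, M̂` have all entries `≥ m > 0`,
then there is `c ∈ ℝⁿ` with `‖M − M̂ − c𝟏ᵀ‖₂ ≤ (√n / m) ‖A − Â‖₂` (spectral norms). -/
theorem rowwise_inverse_softmax_bound {n : ℕ} (M Mhat : Matrix (Fin n) (Fin n) ℝ)
    (m : ℝ) (hm : 0 < m)
    (hA : ∀ i j, m ≤ softmax (M i) j)
    (hAhat : ∀ i j, m ≤ softmax (Mhat i) j) :
    ∃ c : Fin n → ℝ,
      matSpectralNorm (M - Mhat - Matrix.of fun i _ => c i)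
        ≤ (Real.sqrt n / m) *
            matSpectralNorm
              (Matrix.of (fun i => softmax (M i)) -
                Matrix.of (fun i => softmax (Mhat i))) := by
  refine ⟨fun i => Real.log (∑ j, Real.exp (M i j)) - Real.log (∑ j, Real.exp (Mhat i j)), ?_⟩
  set D := M - Mhat - Matrix.of fun i _ =>
    Real.log (∑ j, Real.exp (M i j)) - Real.log (∑ j, Real.exp (Mhat i j))
  set E := Matrix.of (fun i => softmax (M i)) - Matrix.of (fun i => softmax (Mhat i))
  have hD : ∀ i j, D i j = Real.log (softmax (M i) j) - Real.log (softmax (Mhat i) j) := by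
    intro i j
    simp only [D, Matrix.sub_apply, Matrix.of_apply, log_softmax]
    ring
  have hDE : ∀ i j, |D i j| ≤ m⁻¹ * |E i j| := fun i j => by
    rw [hD, inv_mul_eq_div]
    exact Real.abs_log_sub_log_le_abs_sub_div hm (hA i j) (hAhat i j)
  calc matSpectralNorm D ≤ frobNorm D := matSpectralNorm_le_frobNorm D
    _ ≤ m⁻¹ * frobNorm E := frobNorm_le_of_abs_le_mul (inv_nonneg.2 hm.le) hDE
    _ ≤ m⁻¹ * (Real.sqrt n * matSpectralNorm E) := by
      gcongr
      exact frobNorm_le_sqrt_mul_matSpectralNorm E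
    _ = (Real.sqrt n / m) * matSpectralNorm E := by ring
end

section
/- Let a, â ∈ ℝⁿ be probability vectors whose difference a − â has at most 2k nonzero entries, let X ∈ ℝ^{n×d}, and let W_v, Ŵ_v ∈ ℝ^{d×d} with smallest singular value σ_min(W_v) > 0. Suppose there exist c > 0 and 0 ≤ δ < 1 such that cXᵀ satisfies the Restricted Isometry Property with parameters (2k, δ), i.e., (1−δ)‖v‖₂ ≤ ‖cXᵀ v‖₂ ≤ (1+δ)‖v‖₂ for every v ∈ ℝⁿ with at most 2k nonzero entries. If ‖W_v − Ŵ_v‖₂ ≤ ε and the output error satisfies ‖aᵀ X W_v − âᵀ X Ŵ_v‖₂ ≤ ε ‖X‖_{∞,2}, then ‖a − â‖₂ ≤ 2cε ‖X‖_{∞,2} / (σ_min(W_v)(1−δ)). -/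
/-!
Put `v = a − â`. The output error splits as
`vᵀ X W_v = (aᵀ X W_v − âᵀ X Ŵ_v) − (âᵀ X)(W_v − Ŵ_v)`, and since `âᵀ X` is a convex combination
of rows of `X`, both terms have norm at most `ε ‖X‖_{∞,2}`. From below, `σ_min(W_v) > 0` makes the
square matrix `W_v` invertible with `‖W_v⁻¹‖ ≤ σ_min(W_v)⁻¹`; as transposition preserves the
spectral norm, `‖vᵀ X W_v‖ ≥ σ_min(W_v) ‖Xᵀ v‖`. Finally `v` is `2k`-sparse, so the lower RIP
bound gives `(1 − δ) ‖v‖ ≤ c ‖Xᵀ v‖`.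
-/

open scoped BigOperators ENNReal

open Matrix WithLp
open scoped Matrix.Norms.L2Operator

section L2Norm

variable {n : ℕ}

theorem l2norm_eq_norm_toLp (x : Fin n → ℝ) :
    l2norm x = ‖(toLp 2 x : EuclideanSpace ℝ (Fin n))‖ := by
  simp [l2norm, EuclideanSpace.norm_eq]

@[simp]
theorem l2norm_zero : l2norm (0 : Fin n → ℝ) = 0 := by simp [l2norm]

theorem l2norm_nonneg (x : Fin n → ℝ) : 0 ≤ l2norm x := by
  rw [l2norm_eq_norm_toLp]; exact norm_nonneg _

theorem l2norm_smul (c : ℝ) (x : Fin n → ℝ) : l2norm (c • x) = |c| * l2norm x := by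
  simp only [l2norm_eq_norm_toLp, toLp_smul, norm_smul, Real.norm_eq_abs]

theorem l2norm_sub_le (x y : Fin n → ℝ) : l2norm (x - y) ≤ l2norm x + l2norm y := by
  simp only [l2norm_eq_norm_toLp, toLp_sub]; exact norm_sub_le _ _

theorem l2norm_pos_iff {x : Fin n → ℝ} : 0 < l2norm x ↔ x ≠ 0 := by
  simp [l2norm_eq_norm_toLp]

theorem l2norm_sum_le {ι : Type*} (s : Finset ι) (f : ι → Fin n → ℝ) :
    l2norm (∑ i ∈ s, f i) ≤ ∑ i ∈ s, l2norm (f i) := by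
  simp only [l2norm_eq_norm_toLp, toLp_sum]; exact norm_sum_le _ _

end L2Norm

section SpectralNorm

variable {m n : ℕ}

theorem matSpectralNorm_eq_l2_opNorm (A : Matrix (Fin m) (Fin n) ℝ) :
    matSpectralNorm A = ‖A‖ := by
  rw [l2_opNorm_def, ← ContinuousLinearMap.sSup_unitClosedBall_eq_norm]
  refine congrArg sSup (Set.ext fun r => ?_)
  simp only [Set.mem_ofPred_eq, Set.mem_image, Metric.mem_closedBall, dist_zero_right]
  constructor
  · rintro ⟨x, hx, rfl⟩
    exact ⟨toLp 2 x, by rwa [← l2norm_eq_norm_toLp], by simp [l2norm_eq_norm_toLp]⟩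
  · rintro ⟨x, hx, rfl⟩
    exact ⟨ofLp x, by rwa [l2norm_eq_norm_toLp], by rw [l2norm_eq_norm_toLp]; rfl⟩

theorem l2norm_mulVec_le (A : Matrix (Fin m) (Fin n) ℝ) (x : Fin n → ℝ) :
    l2norm (A *ᵥ x) ≤ matSpectralNorm A * l2norm x := by
  simpa [matSpectralNorm_eq_l2_opNorm, l2norm_eq_norm_toLp] using A.l2_opNorm_mulVec (toLp 2 x)

theorem matSpectralNorm_nonneg_s8 (A : Matrix (Fin m) (Fin n) ℝ) : 0 ≤ matSpectralNorm A := by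
  rw [matSpectralNorm_eq_l2_opNorm]; exact norm_nonneg _

theorem matSpectralNorm_le_of_forall_l2norm_mulVec_le {A : Matrix (Fin m) (Fin n) ℝ} {C : ℝ}
    (hC : 0 ≤ C) (h : ∀ x, l2norm (A *ᵥ x) ≤ C * l2norm x) : matSpectralNorm A ≤ C := by
  rw [matSpectralNorm_eq_l2_opNorm, l2_opNorm_def]
  refine ContinuousLinearMap.opNorm_le_bound _ hC fun x => ?_
  show ‖toLp 2 (A *ᵥ ofLp x)‖ ≤ C * ‖x‖
  simpa [l2norm_eq_norm_toLp] using h (ofLp x)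

theorem matSpectralNorm_transpose (A : Matrix (Fin m) (Fin n) ℝ) :
    matSpectralNorm Aᵀ = matSpectralNorm A := by
  rw [matSpectralNorm_eq_l2_opNorm, matSpectralNorm_eq_l2_opNorm,
    ← conjTranspose_eq_transpose_of_trivial, l2_opNorm_conjTranspose]

theorem l2norm_vecMul_le (A : Matrix (Fin m) (Fin n) ℝ) (x : Fin m → ℝ) :
    l2norm (x ᵥ* A) ≤ matSpectralNorm A * l2norm x := by
  rw [← mulVec_transpose, ← matSpectralNorm_transpose]
  exact l2norm_mulVec_le _ _

end SpectralNorm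

section SigmaMin

variable {d : ℕ} {W : Matrix (Fin d) (Fin d) ℝ}

theorem sigmaMin_mul_l2norm_le (W : Matrix (Fin d) (Fin d) ℝ) (x : Fin d → ℝ) :
    sigmaMin W * l2norm x ≤ l2norm (W *ᵥ x) := by
  rcases eq_or_ne x 0 with rfl | hx
  · simp
  have ht : 0 < l2norm x := l2norm_pos_iff.mpr hx
  have hunit : l2norm ((l2norm x)⁻¹ • x) = 1 := by
    rw [l2norm_smul, abs_of_pos (inv_pos.mpr ht), inv_mul_cancel₀ ht.ne']
  have hbdd : BddBelow {r | ∃ y : Fin d → ℝ, l2norm y = 1 ∧ r = l2norm (W *ᵥ y)} :=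
    ⟨0, by rintro r ⟨y, -, rfl⟩; exact l2norm_nonneg _⟩
  have hle := csInf_le hbdd ⟨_, hunit, rfl⟩
  rw [mulVec_smul, l2norm_smul, abs_of_pos (inv_pos.mpr ht)] at hle
  rw [mul_comm]
  exact (le_inv_mul_iff₀ ht).mp hle

theorem isUnit_of_sigmaMin_pos (hσ : 0 < sigmaMin W) : IsUnit W := by
  refine mulVec_injective_iff_isUnit.mp fun x y hxy => sub_eq_zero.mp ?_
  have h := sigmaMin_mul_l2norm_le W (x - y)
  rw [mulVec_sub, hxy, sub_self, l2norm_zero] at h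
  by_contra hne
  exact (mul_pos hσ (l2norm_pos_iff.mpr hne)).not_ge h

theorem matSpectralNorm_inv_le (hσ : 0 < sigmaMin W) :
    matSpectralNorm W⁻¹ ≤ (sigmaMin W)⁻¹ := by
  have hdet := (isUnit_iff_isUnit_det W).mp (isUnit_of_sigmaMin_pos hσ)
  refine matSpectralNorm_le_of_forall_l2norm_mulVec_le (inv_nonneg.mpr hσ.le) fun x => ?_
  have h := sigmaMin_mul_l2norm_le W (W⁻¹ *ᵥ x)
  rw [mulVec_mulVec, mul_nonsing_inv W hdet, one_mulVec] at h
  exact (le_inv_mul_iff₀ hσ).mpr h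

theorem sigmaMin_mul_l2norm_le_l2norm_vecMul (hσ : 0 < sigmaMin W) (x : Fin d → ℝ) :
    sigmaMin W * l2norm x ≤ l2norm (x ᵥ* W) := by
  have hdet := (isUnit_iff_isUnit_det W).mp (isUnit_of_sigmaMin_pos hσ)
  have hx : x = (x ᵥ* W) ᵥ* W⁻¹ := by rw [vecMul_vecMul, mul_nonsing_inv W hdet, vecMul_one]
  have h : l2norm x ≤ (sigmaMin W)⁻¹ * l2norm (x ᵥ* W) :=
    calc l2norm x ≤ matSpectralNorm W⁻¹ * l2norm (x ᵥ* W) := by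
          conv_lhs => rw [hx]
          exact l2norm_vecMul_le _ _
      _ ≤ (sigmaMin W)⁻¹ * l2norm (x ᵥ* W) := by
          gcongr
          exacts [l2norm_nonneg _, matSpectralNorm_inv_le hσ]
  exact (le_inv_mul_iff₀ hσ).mp h

end SigmaMin

theorem l2norm_row_le_maxRowNorm {n d : ℕ} (X : Matrix (Fin n) (Fin d) ℝ) (i : Fin n) :
    l2norm (X i) ≤ maxRowNorm X :=
  le_ciSup (f := fun i => l2norm (X i)) (Set.finite_range _).bddAbove i

theorem l2norm_vecMul_le_maxRowNorm {n d : ℕ} (X : Matrix (Fin n) (Fin d) ℝ) {p : Fin n → ℝ}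
    (hp : ∀ i, 0 ≤ p i) (hsum : ∑ i, p i = 1) : l2norm (p ᵥ* X) ≤ maxRowNorm X :=
  calc l2norm (p ᵥ* X) ≤ ∑ i, p i * l2norm (X i) := by
        simpa only [vecMul_eq_sum, l2norm_smul, abs_of_nonneg (hp _)] using
          l2norm_sum_le Finset.univ fun i => p i • X i
    _ ≤ ∑ i, p i * maxRowNorm X := by
        gcongr with i
        exacts [hp i, l2norm_row_le_maxRowNorm X i]
    _ = maxRowNorm X := by rw [← Finset.sum_mul, hsum, one_mul]

theorem l2norm_sub_vecMul_le {n d : ℕ} (a b : Fin n → ℝ) (X : Matrix (Fin n) (Fin d) ℝ)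
    (W W' : Matrix (Fin d) (Fin d) ℝ) :
    l2norm ((a - b) ᵥ* (X * W)) ≤
      l2norm (a ᵥ* (X * W) - b ᵥ* (X * W')) + matSpectralNorm (W - W') * l2norm (b ᵥ* X) := by
  have hsplit : (a - b) ᵥ* (X * W) = (a ᵥ* (X * W) - b ᵥ* (X * W')) - (b ᵥ* X) ᵥ* (W - W') := by
    rw [vecMul_vecMul, Matrix.mul_sub, vecMul_sub, sub_vecMul]
    abel
  rw [hsplit]
  exact (l2norm_sub_le _ _).trans (add_le_add_right (l2norm_vecMul_le _ _) _)

theorem rip_attention_error_bound_general {n d k : ℕ} (a ahat : Fin n → ℝ)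
    (X : Matrix (Fin n) (Fin d) ℝ) (Wv Wvhat : Matrix (Fin d) (Fin d) ℝ)
    (c δ ε : ℝ)
    (hahat : ∀ i, 0 ≤ ahat i) (hahatsum : ∑ i, ahat i = 1)
    (hsparse : ∃ s : Finset (Fin n), s.card ≤ 2 * k ∧ ∀ i ∉ s, (a - ahat) i = 0)
    (hσ : 0 < sigmaMin Wv)
    (hc : 0 < c) (hδ1 : δ < 1)
    (hRIP : ∀ v : Fin n → ℝ,
      (∃ s : Finset (Fin n), s.card ≤ 2 * k ∧ ∀ i ∉ s, v i = 0) →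
        (1 - δ) * l2norm v ≤ l2norm ((c • X.transpose).mulVec v) ∧
        l2norm ((c • X.transpose).mulVec v) ≤ (1 + δ) * l2norm v)
    (hW : matSpectralNorm (Wv - Wvhat) ≤ ε)
    (hout : l2norm (Matrix.vecMul a (X * Wv) - Matrix.vecMul ahat (X * Wvhat))
      ≤ ε * maxRowNorm X) :
    l2norm (a - ahat) ≤ 2 * c * ε * maxRowNorm X / (sigmaMin Wv * (1 - δ)) := by
  set v := a - ahat
  set σ := sigmaMin Wv
  have hupper : l2norm (v ᵥ* (X * Wv)) ≤ 2 * ε * maxRowNorm X :=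
    calc l2norm (v ᵥ* (X * Wv))
        ≤ ε * maxRowNorm X + matSpectralNorm (Wv - Wvhat) * l2norm (ahat ᵥ* X) :=
          (l2norm_sub_vecMul_le a ahat X Wv Wvhat).trans (add_le_add_left hout _)
      _ ≤ ε * maxRowNorm X + ε * maxRowNorm X :=
          add_le_add_right (mul_le_mul hW (l2norm_vecMul_le_maxRowNorm X hahat hahatsum)
            (l2norm_nonneg _) ((matSpectralNorm_nonneg_s8 _).trans hW)) _
      _ = 2 * ε * maxRowNorm X := by ring
  have hlower : σ * l2norm (v ᵥ* X) ≤ l2norm (v ᵥ* (X * Wv)) := by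
    rw [← vecMul_vecMul]
    exact sigmaMin_mul_l2norm_le_l2norm_vecMul hσ _
  have hrip : (1 - δ) * l2norm v ≤ c * l2norm (v ᵥ* X) := by
    simpa only [smul_mulVec, mulVec_transpose, l2norm_smul, abs_of_pos hc] using
      (hRIP v hsparse).1
  rw [le_div_iff₀ (mul_pos hσ (sub_pos.mpr hδ1))]
  calc l2norm v * (σ * (1 - δ)) = σ * ((1 - δ) * l2norm v) := by ring
    _ ≤ σ * (c * l2norm (v ᵥ* X)) := mul_le_mul_of_nonneg_left hrip hσ.le
    _ = c * (σ * l2norm (v ᵥ* X)) := by ring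
    _ ≤ c * (2 * ε * maxRowNorm X) := mul_le_mul_of_nonneg_left (hlower.trans hupper) hc.le
    _ = 2 * c * ε * maxRowNorm X := by ring

/-- the RIP-based attention error bound
`‖a − â‖₂ ≤ 2cε‖X‖_{∞,2} / (σ_min(W_v)(1−δ))`. -/
theorem rip_attention_error_bound {n d k : ℕ} (a ahat : Fin n → ℝ)
    (X : Matrix (Fin n) (Fin d) ℝ) (Wv Wvhat : Matrix (Fin d) (Fin d) ℝ)
    (c δ ε : ℝ)
    (ha : ∀ i, 0 ≤ a i) (hasum : ∑ i, a i = 1)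
    (hahat : ∀ i, 0 ≤ ahat i) (hahatsum : ∑ i, ahat i = 1)
    (hsparse : ∃ s : Finset (Fin n), s.card ≤ 2 * k ∧ ∀ i ∉ s, (a - ahat) i = 0)
    (hσ : 0 < sigmaMin Wv)
    (hc : 0 < c) (hδ0 : 0 ≤ δ) (hδ1 : δ < 1)
    (hRIP : ∀ v : Fin n → ℝ,
      (∃ s : Finset (Fin n), s.card ≤ 2 * k ∧ ∀ i ∉ s, v i = 0) →
        (1 - δ) * l2norm v ≤ l2norm ((c • X.transpose).mulVec v) ∧
        l2norm ((c • X.transpose).mulVec v) ≤ (1 + δ) * l2norm v)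
    (hW : matSpectralNorm (Wv - Wvhat) ≤ ε)
    (hout : l2norm (Matrix.vecMul a (X * Wv) - Matrix.vecMul ahat (X * Wvhat))
      ≤ ε * maxRowNorm X) :
    l2norm (a - ahat) ≤ 2 * c * ε * maxRowNorm X / (sigmaMin Wv * (1 - δ)) :=
  rip_attention_error_bound_general a ahat X Wv Wvhat c δ ε hahat hahatsum hsparse hσ hc hδ1 hRIP hW
    hout
end
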